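/- Every closed (2m−1)-bounce billiard path q₀, q₁, …, q_{2m−1}, q_{2m} = q₀ in the wedge W_γ retraces itself: q_{m+j} = q_{m−j} for every integer j with 0 ≤ j ≤ m. -/

import Mathlib

/-!
Unfold the path: reflecting everything after the `k`-th bounce across the `k`-th boundary line,
for `k = n, …, 1`, straightens it into the segment from `p` to `S p`, where `S` is the composition
of the `n` reflections. Hence the initial direction, and then each bounce point, is determined by
`p` and the sequence of lines hit: a bounce point is the only point of its line whose unfolded
image lies on that segment, because no segment runs along a boundary line. The
reversed path is again a closed billiard path at `p`, and when `n` is odd it hits the lines in the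
same order, so it is the original path: `q k = q (n + 1 - k)`.
-/

open Real

noncomputable section

/-- The Euclidean plane. -/
abbrev E2 := EuclideanSpace ℝ (Fin 2)

/-- Construct a point of the plane from its coordinates. -/
def pt (x y : ℝ) : E2 := WithLp.toLp 2 ![x, y]

/-- The open wedge of opening angle `γ`, bounded by the horizontal line `{y = 0}`
and the line `{y = x·tan γ}`. -/
def wedge (γ : ℝ) : Set E2 := {p | 0 < p 0 ∧ 0 < p 1 ∧ p 1 < p 0 * Real.tan γ}

/-- A direction vector of the boundary line: the horizontal line if `horiz`, the
line `{y = x·tan γ}` otherwise. -/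
def lineDir (γ : ℝ) (horiz : Bool) : E2 :=
  if horiz then pt 1 0 else pt (Real.cos γ) (Real.sin γ)

/-- Membership of the corresponding boundary line. -/
def onBoundary (γ : ℝ) (horiz : Bool) (p : E2) : Prop :=
  if horiz then p 1 = 0 else p 1 = p 0 * Real.tan γ

/-- The linear reflection of `ℝ²` across the `1`-dimensional subspace spanned by `d`,
applied to `v` (for `d ≠ 0`). -/
def reflDir (d v : E2) : E2 :=
  (2 * (inner ℝ v d : ℝ) / (inner ℝ d d : ℝ)) • d - v

/-- A closed `n`-bounce billiard path based at the point `p` of the wedge `W_γ`: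
a sequence `q 0 = p, q 1, …, q n, q (n+1) = p` with consecutive points distinct,
whose intermediate points lie alternately on the two boundary lines (minus the
vertex), whose open segments lie in the open wedge, and which satisfies the law
of reflection at each bounce. -/
structure ClosedBounce (γ : ℝ) (p : E2) (n : ℕ) where
  q : ℕ → E2
  /-- `horiz k` records whether the `k`-th bounce is on the horizontal line `ℓ₀`. -/
  horiz : ℕ → Bool
  alt : ∀ k, 1 ≤ k → k < n → horiz (k + 1) = !horiz k
  start : q 0 = p
  closes : q (n + 1) = p
  distinct : ∀ k ≤ n, q k ≠ q (k + 1)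
  bounce_ne_vertex : ∀ k, 1 ≤ k → k ≤ n → q k ≠ 0
  onLine : ∀ k, 1 ≤ k → k ≤ n → onBoundary γ (horiz k) (q k)
  segs_in_wedge : ∀ k ≤ n, ∀ t : ℝ, 0 < t → t < 1 →
    (1 - t) • q k + t • q (k + 1) ∈ wedge γ
  reflects : ∀ k, 1 ≤ k → k ≤ n →
    (‖q (k + 1) - q k‖)⁻¹ • (q (k + 1) - q k) =
      reflDir (lineDir γ (horiz k)) ((‖q k - q (k - 1)‖)⁻¹ • (q k - q (k - 1)))

/-- The total length of a closed `n`-bounce billiard path. -/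
def totalLength {γ : ℝ} {p : E2} {n : ℕ} (P : ClosedBounce γ p n) : ℝ :=
  ∑ k ∈ Finset.range (n + 1), ‖P.q (k + 1) - P.q k‖

lemma reflDir_eq_reflection (d v : E2) : reflDir d v = (ℝ ∙ d).reflection v := by
  rw [reflDir, Submodule.reflection_apply, Submodule.starProjection_singleton,
    real_inner_self_eq_norm_sq, real_inner_comm]
  module

lemma cos_ne_zero_of_mem_wedge {γ : ℝ} {p : E2} (hp : p ∈ wedge γ) : Real.cos γ ≠ 0 := by
  intro hc
  have h := hp.2.2
  rw [Real.tan_eq_sin_div_cos, hc, div_zero, mul_zero] at h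
  exact hp.2.1.not_gt h

lemma mem_span_lineDir_of_onBoundary {γ : ℝ} (hc : Real.cos γ ≠ 0) {b : Bool} {v : E2}
    (h : onBoundary γ b v) : v ∈ ℝ ∙ lineDir γ b := by
  rw [Submodule.mem_span_singleton]
  cases b
  · have h' : v 1 = v 0 * Real.tan γ := h
    refine ⟨v 0 / Real.cos γ, ?_⟩
    ext i
    fin_cases i <;> simp [lineDir, pt, h', Real.tan_eq_sin_div_cos, div_mul_cancel₀ _ hc,
      div_mul_eq_mul_div, mul_div_assoc]
  · have h' : v 1 = 0 := h
    refine ⟨v 0, ?_⟩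
    ext i
    fin_cases i <;> simp [lineDir, pt, h']

lemma notMem_wedge_of_mem_span_lineDir {γ : ℝ} (hc : Real.cos γ ≠ 0) {b : Bool} {v : E2}
    (hv : v ∈ ℝ ∙ lineDir γ b) : v ∉ wedge γ := by
  obtain ⟨c, rfl⟩ := Submodule.mem_span_singleton.1 hv
  rintro ⟨-, h1, h2⟩
  cases b
  · simp only [lineDir, if_neg Bool.false_ne_true, pt, PiLp.smul_apply, smul_eq_mul,
      Matrix.cons_val_zero, Matrix.cons_val_one, Real.tan_eq_sin_div_cos] at h2
    rw [mul_assoc, mul_div_cancel₀ _ hc] at h2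
    exact h2.false
  · simp [lineDir, pt] at h1

def unfolding (γ : ℝ) (h : ℕ → Bool) : ℕ → (E2 ≃ₗᵢ[ℝ] E2)
  | 0 => LinearIsometryEquiv.refl ℝ E2
  | k + 1 => ((ℝ ∙ lineDir γ (h (k + 1))).reflection).trans (unfolding γ h k)

lemma unfolding_congr {γ : ℝ} {h h' : ℕ → Bool} {k : ℕ}
    (hh : ∀ i, 1 ≤ i → i ≤ k → h i = h' i) : unfolding γ h k = unfolding γ h' k := by
  induction k with
  | zero => rfl
  | succ k ih =>
    simp only [unfolding, hh (k + 1) (by omega) le_rfl, ih fun i hi hik => hh i hi (by omega)]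

namespace ClosedBounce

variable {γ : ℝ} {p : E2} {n : ℕ} (P : ClosedBounce γ p n)

lemma cos_ne_zero (P : ClosedBounce γ p n) : Real.cos γ ≠ 0 :=
  cos_ne_zero_of_mem_wedge (P.segs_in_wedge 0 n.zero_le (1 / 2) (by norm_num) (by norm_num))

lemma q_mem_span {k : ℕ} (hk : 1 ≤ k) (hkn : k ≤ n) :
    P.q k ∈ ℝ ∙ lineDir γ (P.horiz k) :=
  mem_span_lineDir_of_onBoundary P.cos_ne_zero (P.onLine k hk hkn)

lemma horiz_add_two_mul {k : ℕ} (hk : 1 ≤ k) :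
    ∀ i, k + 2 * i ≤ n → P.horiz (k + 2 * i) = P.horiz k
  | 0, _ => rfl
  | i + 1, hi => by
    rw [show k + 2 * (i + 1) = k + 2 * i + 1 + 1 by ring, P.alt _ (by omega) (by omega),
      P.alt _ (by omega) (by omega), Bool.not_not, horiz_add_two_mul hk i (by omega)]

def dir (k : ℕ) : E2 := ‖P.q (k + 1) - P.q k‖⁻¹ • (P.q (k + 1) - P.q k)

lemma norm_smul_dir {k : ℕ} (hk : k ≤ n) :
    ‖P.q (k + 1) - P.q k‖ • P.dir k = P.q (k + 1) - P.q k := by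
  rw [dir, smul_inv_smul₀ (norm_ne_zero_iff.2 (sub_ne_zero.2 (P.distinct k hk).symm))]

lemma norm_dir {k : ℕ} (hk : k ≤ n) : ‖P.dir k‖ = 1 :=
  norm_smul_inv_norm (sub_ne_zero.2 (P.distinct k hk).symm)

lemma dir_succ {k : ℕ} (hk : k < n) :
    P.dir (k + 1) = (ℝ ∙ lineDir γ (P.horiz (k + 1))).reflection (P.dir k) := by
  simpa only [dir, reflDir_eq_reflection, Nat.add_sub_cancel] using
    P.reflects (k + 1) (by omega) (by omega)

lemma dir_notMem_span {k : ℕ} (hk : k < n) :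
    P.dir k ∉ ℝ ∙ lineDir γ (P.horiz (k + 1)) := by
  intro hd
  have hq := P.q_mem_span (k := k + 1) (by omega) hk
  have hq' : P.q k ∈ ℝ ∙ lineDir γ (P.horiz (k + 1)) := by
    rw [← sub_sub_self (P.q (k + 1)) (P.q k), ← P.norm_smul_dir hk.le]
    exact sub_mem hq (Submodule.smul_mem _ _ hd)
  exact notMem_wedge_of_mem_span_lineDir P.cos_ne_zero
    (add_mem (Submodule.smul_mem _ _ hq') (Submodule.smul_mem _ _ hq))
    (P.segs_in_wedge k hk.le (1 / 2) (by norm_num) (by norm_num))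

lemma unfolding_dir : ∀ k ≤ n, unfolding γ P.horiz k (P.dir k) = P.dir 0
  | 0, _ => rfl
  | k + 1, hk => by
    rw [unfolding, LinearIsometryEquiv.trans_apply, P.dir_succ (by omega),
      Submodule.reflection_reflection, unfolding_dir k (by omega)]

lemma unfolding_q_succ : ∀ k ≤ n, unfolding γ P.horiz k (P.q (k + 1)) =
    p + (∑ j ∈ Finset.range (k + 1), ‖P.q (j + 1) - P.q j‖) • P.dir 0
  | 0, _ => by
    rw [Finset.sum_range_one, P.norm_smul_dir n.zero_le, P.start, add_sub_cancel]
    rfl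
  | k + 1, hk => by
    set R := (ℝ ∙ lineDir γ (P.horiz (k + 1))).reflection
    set ℓ := ‖P.q (k + 1 + 1) - P.q (k + 1)‖
    have hreflect : R (P.q (k + 1 + 1)) = P.q (k + 1) + ℓ • P.dir k := by
      rw [← add_sub_cancel (P.q (k + 1)) (P.q (k + 1 + 1)), map_add, ← P.norm_smul_dir hk,
        map_smul, Submodule.reflection_mem_subspace_eq_self (P.q_mem_span (by omega) hk),
        P.dir_succ (by omega), Submodule.reflection_reflection]
    rw [unfolding, LinearIsometryEquiv.trans_apply, hreflect, map_add, map_smul,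
      unfolding_q_succ k (by omega), P.unfolding_dir k (by omega),
      Finset.sum_range_succ _ (k + 1), add_smul, add_assoc]

lemma unfolding_base : unfolding γ P.horiz n p = p + totalLength P • P.dir 0 := by
  simpa only [P.closes, totalLength] using P.unfolding_q_succ n le_rfl

lemma totalLength_pos : 0 < totalLength P :=
  Finset.sum_pos' (fun _ _ => norm_nonneg _) ⟨0, by simp,
    norm_pos_iff.2 (sub_ne_zero.2 (P.distinct 0 n.zero_le).symm)⟩

lemma dir_zero_eq : P.dir 0 =
    ‖unfolding γ P.horiz n p - p‖⁻¹ • (unfolding γ P.horiz n p - p) := by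
  rw [P.unfolding_base, add_sub_cancel_left, norm_smul, P.norm_dir n.zero_le, mul_one,
    Real.norm_of_nonneg P.totalLength_pos.le, inv_smul_smul₀ P.totalLength_pos.ne']

lemma eq_q_succ_of_unfolding_eq {k : ℕ} (hk : k < n) {x : E2}
    (hx : x ∈ ℝ ∙ lineDir γ (P.horiz (k + 1))) {s : ℝ}
    (hxs : unfolding γ P.horiz k x = p + s • P.dir 0) : x = P.q (k + 1) := by
  set s₀ := ∑ j ∈ Finset.range (k + 1), ‖P.q (j + 1) - P.q j‖
  have hdiff : P.q (k + 1) - x = (s₀ - s) • P.dir k := by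
    apply (unfolding γ P.horiz k).injective
    rw [map_sub, map_smul, P.unfolding_q_succ k hk.le, hxs, P.unfolding_dir k hk.le]
    module
  by_contra hne
  have hs : s₀ - s ≠ 0 := by
    intro h
    rw [h, zero_smul, sub_eq_zero] at hdiff
    exact hne hdiff.symm
  apply P.dir_notMem_span hk
  have h := Submodule.smul_mem _ (s₀ - s)⁻¹ (sub_mem (P.q_mem_span (by omega) hk) hx)
  rwa [hdiff, inv_smul_smul₀ hs] at h

theorem q_eq_of_horiz_eq (P' : ClosedBounce γ p n)
    (hh : ∀ k, 1 ≤ k → k ≤ n → P.horiz k = P'.horiz k) : ∀ k ≤ n + 1, P.q k = P'.q k := by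
  have hdir : P.dir 0 = P'.dir 0 := by
    rw [P.dir_zero_eq, P'.dir_zero_eq, unfolding_congr hh]
  rintro (_ | k) hk
  · rw [P.start, P'.start]
  rcases (show k < n ∨ k = n by omega) with hk | rfl
  · refine (P.eq_q_succ_of_unfolding_eq hk (x := P'.q (k + 1))
      (s := ∑ j ∈ Finset.range (k + 1), ‖P'.q (j + 1) - P'.q j‖) ?_ ?_).symm
    · rw [hh (k + 1) (by omega) hk]
      exact P'.q_mem_span (by omega) hk
    · rw [unfolding_congr fun i hi hik => hh i hi (by omega), P'.unfolding_q_succ k hk.le, hdir]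
  · rw [P.closes, P'.closes]

lemma reflects_backward {k : ℕ} (h1 : 1 ≤ k) (h2 : k ≤ n) :
    ‖P.q (k - 1) - P.q k‖⁻¹ • (P.q (k - 1) - P.q k) =
      reflDir (lineDir γ (P.horiz k)) (‖P.q k - P.q (k + 1)‖⁻¹ • (P.q k - P.q (k + 1))) := by
  rw [← neg_sub (P.q k), ← neg_sub (P.q (k + 1)), norm_neg, norm_neg, smul_neg, smul_neg,
    P.reflects k h1 h2, reflDir_eq_reflection, reflDir_eq_reflection, map_neg,
    Submodule.reflection_reflection]

def reverse : ClosedBounce γ p n where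
  q k := P.q (n + 1 - k)
  horiz k := P.horiz (n + 1 - k)
  alt k hk hkn := by
    rw [show n + 1 - (k + 1) = n - k by omega, show n + 1 - k = n - k + 1 by omega,
      P.alt (n - k) (by omega) (by omega), Bool.not_not]
  start := by simpa using P.closes
  closes := by simpa using P.start
  distinct k hk := by
    rw [show n + 1 - k = n - k + 1 by omega, show n + 1 - (k + 1) = n - k by omega]
    exact (P.distinct _ (by omega)).symm
  bounce_ne_vertex k h1 h2 := P.bounce_ne_vertex _ (by omega) (by omega)
  onLine k h1 h2 := P.onLine _ (by omega) (by omega)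
  segs_in_wedge k hk t ht0 ht1 := by
    have h := P.segs_in_wedge (n - k) (by omega) (1 - t) (by linarith) (by linarith)
    rwa [sub_sub_cancel, add_comm, show n - k + 1 = n + 1 - k by omega,
      show n - k = n + 1 - (k + 1) by omega] at h
  reflects k h1 h2 := by
    have h := P.reflects_backward (k := n + 1 - k) (by omega) (by omega)
    rwa [show n + 1 - k - 1 = n + 1 - (k + 1) by omega,
      show n + 1 - k + 1 = n + 1 - (k - 1) by omega] at h

lemma reverse_horiz_eq (hn : Even (n + 1)) {k : ℕ} (h1 : 1 ≤ k) (h2 : k ≤ n) :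
    P.reverse.horiz k = P.horiz k := by
  obtain ⟨r, hr⟩ := hn
  change P.horiz (n + 1 - k) = P.horiz k
  rcases le_total k r with hkr | hkr
  · rw [show n + 1 - k = k + 2 * (r - k) by omega, P.horiz_add_two_mul h1 _ (by omega)]
  · rw [← P.horiz_add_two_mul (k := n + 1 - k) (by omega) (k - r) (by omega),
      show n + 1 - k + 2 * (k - r) = k by omega]

theorem q_eq_q_sub_of_even (hn : Even (n + 1)) : ∀ k ≤ n + 1, P.q k = P.q (n + 1 - k) :=
  P.q_eq_of_horiz_eq P.reverse fun _ h1 h2 => (P.reverse_horiz_eq hn h1 h2).symm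

end ClosedBounce

theorem odd_bounce_retraces_general (γ : ℝ) (p : E2) (m : ℕ) (hm : 1 ≤ m)
    (P : ClosedBounce γ p (2 * m - 1)) :
    ∀ j ≤ m, P.q (m + j) = P.q (m - j) := by
  intro j hj
  have h := P.q_eq_q_sub_of_even ⟨m, by omega⟩ (m + j) (by omega)
  rwa [show 2 * m - 1 + 1 - (m + j) = m - j by omega] at h

/-- Every closed `(2m−1)`-bounce billiard path `q₀, q₁, …, q_{2m−1}, q_{2m} = q₀`
in the wedge `W_γ` retraces itself: `q (m+j) = q (m−j)` for every `0 ≤ j ≤ m`. -/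
theorem odd_bounce_retraces (γ : ℝ) (hγ0 : 0 < γ) (hγ1 : γ < π / 2)
    (p : E2) (hp : p ∈ wedge γ) (m : ℕ) (hm : 1 ≤ m)
    (P : ClosedBounce γ p (2 * m - 1)) :
    ∀ j ≤ m, P.q (m + j) = P.q (m - j) :=
  odd_bounce_retraces_general γ p m hm P

end
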